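/- Let (C_t)_{t∈[0,1]} be a family of pairwise disjoint subsets of [0,1] such that each C_t is everywhere dense in (0,1). Then for every t ∈ [0,1] there exists a sequence (y_n)_{n≥1} of points of [0,1] which is C_t-uniformly distributed (and hence λ-uniformly distributed) but which is not C_s-uniformly distributed for any s ∈ [0,1] with s ≠ t. -/

import Mathlib

/-!
Since `C_t` is dense in `(0,1)`, for every `s` one can pick a point of `C_t` in each of the
`2s + 1` equal open cells of `(0,1)`, and list these points block after block. A block of `m`
such points has `(d - c) m ± 2` of them in `[c,d]`, so among the first `n` terms there are
`(d - c) n + O(√n)`: the sequence is `λ`-uniformly distributed. It lies in `C_t`, hence is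
`C_t`-uniformly distributed, and it misses every `C_s` with `s ≠ t`, where the count is `0`.
-/

open Filter Topology

/-- A sequence `x` of points of `[0,1]` is `C`-uniformly distributed if for all
`0 ≤ c < d ≤ 1` the relative frequency of indices `k < n` with `x k ∈ [c,d] ∩ C`
tends to `d - c`. -/
def IsUDSeq (C : Set ℝ) (x : ℕ → ℝ) : Prop :=
  ∀ c d : ℝ, 0 ≤ c → c < d → d ≤ 1 →
    Tendsto (fun n : ℕ => (Set.ncard {k : ℕ | k < n ∧ x k ∈ Set.Icc c d ∩ C} : ℝ) / n)
      atTop (𝓝 (d - c))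

/-- A sequence `x` of points of `[0,1]` is `λ`-uniformly distributed if for all
`0 ≤ c < d ≤ 1` the relative frequency of indices `k < n` with `x k ∈ [c,d]`
tends to `d - c`. -/
def IsLambdaUDSeq (x : ℕ → ℝ) : Prop :=
  ∀ c d : ℝ, 0 ≤ c → c < d → d ≤ 1 →
    Tendsto (fun n : ℕ => (Set.ncard {k : ℕ | k < n ∧ x k ∈ Set.Icc c d} : ℝ) / n)
      atTop (𝓝 (d - c))

open Set

lemma nonempty_inter_Ioo_of_Ioo_subset_closure {C : Set ℝ} {u v : ℝ} (huv : u < v)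
    (h : Ioo u v ⊆ closure C) : (C ∩ Ioo u v).Nonempty := by
  have hmid : (u + v) / 2 ∈ Ioo u v := ⟨by linarith, by linarith⟩
  obtain ⟨x, hx, hxC⟩ := mem_closure_iff.1 (h hmid) _ isOpen_Ioo hmid
  exact ⟨x, hxC, hx⟩

/-- The blocks `{s ^ 2 + r | r ≤ 2s} = [s², (s + 1)²)` of indices partition `ℕ`. -/
def InSquareCells (y : ℕ → ℝ) : Prop :=
  ∀ s r : ℕ, r < 2 * s + 1 →
    y (s ^ 2 + r) ∈ Ioo ((r : ℝ) / (2 * s + 1 : ℕ)) (((r : ℝ) + 1) / (2 * s + 1 : ℕ))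

lemma exists_inSquareCells {C : Set ℝ} (hC : Ioo 0 1 ⊆ closure C) :
    ∃ y : ℕ → ℝ, (∀ k, y k ∈ C) ∧ InSquareCells y := by
  have cell : ∀ s r : ℕ, r < 2 * s + 1 →
      ∃ x ∈ C, x ∈ Ioo ((r : ℝ) / (2 * s + 1 : ℕ)) (((r : ℝ) + 1) / (2 * s + 1 : ℕ)) := by
    intro s r hr
    have hm : (0 : ℝ) < (2 * s + 1 : ℕ) := by positivity
    have hr' : (r : ℝ) + 1 ≤ (2 * s + 1 : ℕ) := by exact_mod_cast hr
    refine nonempty_inter_Ioo_of_Ioo_subset_closure (by gcongr; linarith) ?_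
    refine (Ioo_subset_Ioo (by positivity) ?_).trans hC
    rwa [div_le_one hm]
  have hk : ∀ k, k - k.sqrt ^ 2 < 2 * k.sqrt + 1 := fun k => by
    have := Nat.sqrt_le' k
    have : k < (k.sqrt + 1) ^ 2 := Nat.lt_succ_sqrt' k
    have : (k.sqrt + 1) ^ 2 = k.sqrt ^ 2 + 2 * k.sqrt + 1 := by ring
    omega
  choose y hyC hy using fun k => cell k.sqrt (k - k.sqrt ^ 2) (hk k)
  refine ⟨y, hyC, fun s r hr => ?_⟩
  have hs : (s ^ 2 + r).sqrt = s := Nat.sqrt_add_eq' s (by omega)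
  have h := hy (s ^ 2 + r)
  rw [hs] at h
  simpa only [Nat.add_sub_cancel_left] using h

lemma Ico_ceil_floor_subset_filter {m : ℕ} {z : ℕ → ℝ}
    (hz : ∀ r < m, z r ∈ Ioo ((r : ℝ) / m) (((r : ℝ) + 1) / m)) {c d : ℝ} (hd0 : 0 ≤ d)
    (hd : d ≤ 1) : Finset.Ico ⌈c * m⌉₊ ⌊d * m⌋₊ ⊆ {r ∈ Finset.range m | z r ∈ Icc c d} := by
  intro r hr
  rw [Finset.mem_Ico, Nat.ceil_le, ← Nat.add_one_le_iff,
    Nat.le_floor_iff (mul_nonneg hd0 m.cast_nonneg)] at hr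
  have hrm : r < m := by
    have : ((r + 1 : ℕ) : ℝ) ≤ m := hr.2.trans (mul_le_of_le_one_left m.cast_nonneg hd)
    exact_mod_cast this
  have hm : (0 : ℝ) < m := by exact_mod_cast (Nat.zero_le r).trans_lt hrm
  obtain ⟨h1, h2⟩ := hz r hrm
  rw [Finset.mem_filter, Finset.mem_range]
  refine ⟨hrm, le_trans ?_ h1.le, h2.le.trans ?_⟩
  · rw [le_div_iff₀ hm]; exact hr.1
  · rw [div_le_iff₀ hm]; exact_mod_cast hr.2

lemma filter_subset_Ico_floor_ceil {m : ℕ} {z : ℕ → ℝ}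
    (hz : ∀ r < m, z r ∈ Ioo ((r : ℝ) / m) (((r : ℝ) + 1) / m)) {c d : ℝ} (hc : 0 ≤ c) :
    {r ∈ Finset.range m | z r ∈ Icc c d} ⊆ Finset.Ico ⌊c * m⌋₊ ⌈d * m⌉₊ := by
  intro r hr
  rw [Finset.mem_filter, Finset.mem_range] at hr
  obtain ⟨hrm, hcr, hrd⟩ := hr
  have hm : (0 : ℝ) < m := by exact_mod_cast (Nat.zero_le r).trans_lt hrm
  obtain ⟨h1, h2⟩ := hz r hrm
  rw [Finset.mem_Ico, ← Nat.lt_add_one_iff, Nat.floor_lt (mul_nonneg hc hm.le), Nat.lt_ceil]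
  push_cast
  constructor
  · rw [← lt_div_iff₀ hm]; exact hcr.trans_lt h2
  · rw [← div_lt_iff₀ hm]; exact h1.trans_le hrd

lemma abs_count_sub_le_two {m : ℕ} {z : ℕ → ℝ}
    (hz : ∀ r < m, z r ∈ Ioo ((r : ℝ) / m) (((r : ℝ) + 1) / m))
    {c d : ℝ} (hc : 0 ≤ c) (hcd : c ≤ d) (hd : d ≤ 1) :
    |(Nat.count (fun r => z r ∈ Icc c d) m : ℝ) - (d - c) * m| ≤ 2 := by
  have hcm : 0 ≤ c * m := mul_nonneg hc m.cast_nonneg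
  have hdm : 0 ≤ d * m := mul_nonneg (hc.trans hcd) m.cast_nonneg
  have hlo := Finset.card_le_card (Ico_ceil_floor_subset_filter (c := c) hz (hc.trans hcd) hd)
  have hup := Finset.card_le_card (filter_subset_Ico_floor_ceil (d := d) hz hc)
  have hfc : ⌊c * m⌋₊ ≤ ⌈d * m⌉₊ :=
    (Nat.floor_le_ceil _).trans (Nat.ceil_le_ceil (by gcongr))
  rw [Nat.card_Ico, ← Nat.count_eq_card_filter_range] at hlo hup
  have hlo' : (⌊d * m⌋₊ : ℝ) ≤ Nat.count (fun r => z r ∈ Icc c d) m + ⌈c * m⌉₊ := by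
    exact_mod_cast (by omega : ⌊d * m⌋₊ ≤ Nat.count (fun r => z r ∈ Icc c d) m + ⌈c * m⌉₊)
  have hup' : (Nat.count (fun r => z r ∈ Icc c d) m + ⌊c * m⌋₊ : ℝ) ≤ ⌈d * m⌉₊ := by
    exact_mod_cast (by omega : Nat.count (fun r => z r ∈ Icc c d) m + ⌊c * m⌋₊ ≤ ⌈d * m⌉₊)
  have := Nat.sub_one_lt_floor (d * m)
  have := Nat.ceil_lt_add_one hcm
  have := Nat.sub_one_lt_floor (c * m)
  have := Nat.ceil_lt_add_one hdm
  rw [abs_le]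
  constructor <;> linarith

lemma abs_count_sq_sub_le {y : ℕ → ℝ} (hy : InSquareCells y) {c d : ℝ} (hc : 0 ≤ c)
    (hcd : c ≤ d) (hd : d ≤ 1) (S : ℕ) :
    |(Nat.count (fun k => y k ∈ Icc c d) (S ^ 2) : ℝ) - (d - c) * (S ^ 2 : ℕ)| ≤ 2 * S := by
  induction S with
  | zero => simp
  | succ S ih =>
    have hblock := abs_count_sub_le_two (z := fun r => y (S ^ 2 + r)) (hy S) hc hcd hd
    rw [show (S + 1) ^ 2 = S ^ 2 + (2 * S + 1) by ring, Nat.count_add]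
    push_cast at ih hblock ⊢
    rw [abs_le] at ih hblock ⊢
    constructor <;> nlinarith

lemma abs_sub_le_sqrt_of_sq {f : ℕ → ℝ} (hf : Monotone f) {a K : ℝ} (ha0 : 0 ≤ a) (ha1 : a ≤ 1)
    (h : ∀ S : ℕ, |f (S ^ 2) - a * (S ^ 2 : ℕ)| ≤ K * S) {n : ℕ} (hn : 1 ≤ n) :
    |f n - a * n| ≤ (2 * K + 3) * √n := by
  have hK : 0 ≤ K := by simpa using (abs_nonneg _).trans (h 1)
  set S := n.sqrt
  have hS1 : (1 : ℝ) ≤ S := by exact_mod_cast Nat.sqrt_pos.2 hn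
  have hSn : (S : ℝ) ≤ √n := Real.nat_sqrt_le_real_sqrt
  have hlo : S ^ 2 ≤ n := Nat.sqrt_le' n
  have hhi : n ≤ (S + 1) ^ 2 := (Nat.lt_succ_sqrt' n).le
  have hlo' : ((S ^ 2 : ℕ) : ℝ) ≤ n := by exact_mod_cast hlo
  have hhi' : (n : ℝ) ≤ ((S + 1) ^ 2 : ℕ) := by exact_mod_cast hhi
  have hf_lo := abs_le.1 (h S)
  have hf_hi := abs_le.1 (h (S + 1))
  have hf_mono_lo := hf hlo
  have hf_mono_hi := hf hhi
  push_cast at hlo' hhi' hf_lo hf_hi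
  have hbound : |f n - a * n| ≤ (2 * K + 3) * S := by
    rw [abs_le]; constructor <;> nlinarith
  exact hbound.trans (by gcongr)

lemma tendsto_div_of_abs_sub_le_sqrt {f : ℕ → ℝ} {a K : ℝ}
    (h : ∀ n, 1 ≤ n → |f n - a * n| ≤ K * √n) :
    Tendsto (fun n : ℕ => f n / n) atTop (𝓝 a) := by
  have hK : Tendsto (fun n : ℕ => K / √n) atTop (𝓝 0) :=
    tendsto_const_nhds.div_atTop (Real.tendsto_sqrt_atTop.comp tendsto_natCast_atTop_atTop)
  rw [tendsto_iff_norm_sub_tendsto_zero]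
  refine squeeze_zero' (Eventually.of_forall fun n => norm_nonneg _) ?_ hK
  filter_upwards [eventually_ge_atTop 1] with n hn
  have hn' : (0 : ℝ) < n := by exact_mod_cast hn
  calc ‖f n / n - a‖ = |f n - a * n| / n := by
        rw [Real.norm_eq_abs, ← abs_of_pos hn', ← abs_div, abs_of_pos hn', sub_div,
          mul_div_cancel_right₀ _ hn'.ne']
    _ ≤ K * √n / n := by gcongr; exact h n hn
    _ = K / √n := by rw [mul_div_assoc, Real.sqrt_div_self', mul_one_div]

lemma ncard_setOf_lt_and_eq_count (p : ℕ → Prop) [DecidablePred p] (n : ℕ) :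
    {k | k < n ∧ p k}.ncard = Nat.count p n := by
  rw [Nat.count_eq_card_filter_range, ← Set.ncard_coe_finset]
  congr
  ext k
  simp

lemma isLambdaUDSeq_of_inSquareCells {y : ℕ → ℝ} (hy : InSquareCells y) : IsLambdaUDSeq y := by
  intro c d hc hcd hd
  simp only [ncard_setOf_lt_and_eq_count]
  exact tendsto_div_of_abs_sub_le_sqrt fun n hn =>
    abs_sub_le_sqrt_of_sq (Nat.mono_cast.comp (Nat.count_monotone _)) (by linarith) (by linarith)
      (abs_count_sq_sub_le hy hc hcd.le hd) hn

lemma isUDSeq_of_forall_mem {C : Set ℝ} {y : ℕ → ℝ} (hyC : ∀ k, y k ∈ C)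
    (hy : IsLambdaUDSeq y) : IsUDSeq C y := by
  intro c d hc hcd hd
  simpa only [Set.mem_inter_iff, hyC, and_true] using hy c d hc hcd hd

lemma not_isUDSeq_of_forall_notMem {C : Set ℝ} {y : ℕ → ℝ} (hyC : ∀ k, y k ∉ C) :
    ¬ IsUDSeq C y := by
  intro hy
  have h := hy 0 1 le_rfl one_pos le_rfl
  simp [hyC] at h

/-- if `(C_t)_{t ∈ [0,1]}` is a family of pairwise disjoint subsets of
`[0,1]`, each everywhere dense in `(0,1)`, then for every `t` there is a sequence of
points of `[0,1]` which is `C_t`-uniformly distributed (hence `λ`-uniformly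
distributed) but not `C_s`-uniformly distributed for any `s ≠ t`. -/
theorem stmt6 (C : ↥(Set.Icc (0 : ℝ) 1) → Set ℝ)
    (hsub : ∀ t, C t ⊆ Set.Icc 0 1)
    (hdisj : ∀ t t', t ≠ t' → C t ∩ C t' = ∅)
    (hdense : ∀ t, Set.Ioo (0 : ℝ) 1 ⊆ closure (C t)) :
    ∀ t, ∃ y : ℕ → ℝ, (∀ n, y n ∈ Set.Icc (0 : ℝ) 1) ∧ IsUDSeq (C t) y ∧
      IsLambdaUDSeq y ∧ ∀ s, s ≠ t → ¬ IsUDSeq (C s) y := by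
  intro t
  obtain ⟨y, hyC, hy⟩ := exists_inSquareCells (hdense t)
  have hunif := isLambdaUDSeq_of_inSquareCells hy
  refine ⟨y, fun n => hsub t (hyC n), isUDSeq_of_forall_mem hyC hunif, hunif, fun s hst => ?_⟩
  exact not_isUDSeq_of_forall_notMem fun k hk =>
    (hdisj s t hst).subset ⟨hk, hyC k⟩
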